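/- The Choquet-type trace is additive on sums of monotone increasing functional calculi: for any positive semidefinite a ∈ Mₙ(ℂ) and any monotone increasing real functions f, g on the spectrum of a with f, g ≥ 0, one has φ_α(f(a) + g(a)) = φ_α(f(a)) + φ_α(g(a)), where f(a) denotes the functional calculus. -/

import Mathlib

open Matrix BigOperators Finset
open scoped ComplexOrder

/-- The `i`-th largest eigenvalue (0-indexed) of a Hermitian matrix. -/
noncomputable def eigDesc {n : ℕ} (a : Matrix (Fin n) (Fin n) ℂ) (ha : a.IsHermitian) (i : Fin n) : ℝ :=
  ha.eigenvalues (Tuple.sort ha.eigenvalues i.rev)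

/-- Eigenvalues in decreasing order, extended by `0` beyond the size. `eigN a ha i = λ_{i+1}(a)`. -/
noncomputable def eigN {n : ℕ} (a : Matrix (Fin n) (Fin n) ℂ) (ha : a.IsHermitian) (i : ℕ) : ℝ :=
  if h : i < n then eigDesc a ha ⟨i, h⟩ else 0

/-- The non-linear trace of Choquet type:
`φ_α(a) = ∑_{i=1}^{n-1} (λ_i(a) - λ_{i+1}(a)) α(i) + λ_n(a) α(n)`. -/
noncomputable def choquetTrace {n : ℕ} (α : ℕ → ℝ) (a : Matrix (Fin n) (Fin n) ℂ)
    (ha : a.IsHermitian) : ℝ :=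
  ∑ i ∈ Finset.range n, (eigN a ha i - eigN a ha (i + 1)) * α (i + 1)

/-- Functional calculus of a Hermitian matrix `a` by a function `f : ℝ → ℝ` on its eigenvalues. -/
noncomputable def funCalc {n : ℕ} (f : ℝ → ℝ) (a : Matrix (Fin n) (Fin n) ℂ)
    (ha : a.IsHermitian) : Matrix (Fin n) (Fin n) ℂ :=
  (ha.eigenvectorUnitary : Matrix (Fin n) (Fin n) ℂ) *
    Matrix.diagonal (fun i => (f (ha.eigenvalues i) : ℂ)) *
    star (ha.eigenvectorUnitary : Matrix (Fin n) (Fin n) ℂ)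

/-- The absolute value `|a| = (a^* a)^{1/2}` of a matrix. -/
noncomputable def matAbs {n : ℕ} (a : Matrix (Fin n) (Fin n) ℂ) : Matrix (Fin n) (Fin n) ℂ :=
  ((Matrix.posSemidef_conjTranspose_mul_self a).1.eigenvectorUnitary : Matrix (Fin n) (Fin n) ℂ) *
    diagonal ((↑) ∘ (√·) ∘ (Matrix.posSemidef_conjTranspose_mul_self a).1.eigenvalues) *
    (star (Matrix.posSemidef_conjTranspose_mul_self a).1.eigenvectorUnitary : Matrix (Fin n) (Fin n) ℂ)

theorem matAbs_isHermitian {n : ℕ} (a : Matrix (Fin n) (Fin n) ℂ) : (matAbs a).IsHermitian :=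
  isHermitian_mul_mul_conjTranspose _
    (isHermitian_diagonal_of_self_adjoint _ (by ext i; simp [Function.comp]))


/-! All three matrices are diagonal in the eigenbasis of `a`, with diagonals `f ∘ λ`, `g ∘ λ` and
`(f + g) ∘ λ`. As `f` and `g` are monotone, one permutation sorting the eigenvalues of `a` sorts all
three diagonals, so the ordered eigenvalues of `f(a) + g(a)` are the sums of those of `f(a)` and
`g(a)`; and `φ_α` is linear in the ordered eigenvalues. -/

theorem Matrix.charpoly_unitary_conj {R m : Type*} [CommRing R] [StarRing R] [Fintype m]
    [DecidableEq m] (U : unitaryGroup m R) (D : Matrix m m R) :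
    ((U : Matrix m m R) * D * star (U : Matrix m m R)).charpoly = D.charpoly := by
  rw [charpoly_mul_comm, ← mul_assoc, UnitaryGroup.star_mul_self, one_mul]

theorem Matrix.IsHermitian.map_eigenvalues_eq_of_eq_conj_diagonal {𝕜 m : Type*} [RCLike 𝕜]
    [Fintype m] [DecidableEq m] {b : Matrix m m 𝕜} (hb : b.IsHermitian)
    (U : unitaryGroup m 𝕜) (e : m → ℝ)
    (h : b = (U : Matrix m m 𝕜) * diagonal (fun i => (e i : 𝕜)) * star (U : Matrix m m 𝕜)) :
    Multiset.map hb.eigenvalues univ.val = Multiset.map e univ.val := by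
  have hroots : b.charpoly.roots = (Multiset.map e univ.val).map (RCLike.ofReal : ℝ → 𝕜) := by
    rw [h, charpoly_unitary_conj, charpoly_diagonal, prod_eq_multiset_prod]
    simpa only [Multiset.map_map, Function.comp_def] using Polynomial.roots_multiset_prod_X_sub_C
      ((Multiset.map e univ.val).map (RCLike.ofReal : ℝ → 𝕜))
  rw [hb.roots_charpoly_eq_eigenvalues, ← Multiset.map_map] at hroots
  exact Multiset.map_injective RCLike.ofReal_injective hroots

theorem Fin.eq_of_monotone_of_map_univ_eq {α : Type*} [PartialOrder α] {n : ℕ} {u v : Fin n → α}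
    (hu : Monotone u) (hv : Monotone v) (h : Multiset.map u univ.val = Multiset.map v univ.val) :
    u = v := by
  rw [Fin.univ_val_map, Fin.univ_val_map] at h
  exact List.ofFn_injective (List.Perm.eq_of_sortedLE
    (List.sortedLE_ofFn_iff.mpr hu) (List.sortedLE_ofFn_iff.mpr hv) (Multiset.coe_eq_coe.mp h))

theorem eigDesc_eq_of_eq_conj_diagonal {n : ℕ} {b : Matrix (Fin n) (Fin n) ℂ}
    (hb : b.IsHermitian) (U : unitaryGroup (Fin n) ℂ) (e : Fin n → ℝ) (σ : Equiv.Perm (Fin n))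
    (hσ : Monotone (e ∘ σ))
    (h : b = (U : Matrix (Fin n) (Fin n) ℂ) * diagonal (fun i => (e i : ℂ))
      * star (U : Matrix (Fin n) (Fin n) ℂ)) (i : Fin n) :
    eigDesc b hb i = e (σ i.rev) := by
  refine congrFun (Fin.eq_of_monotone_of_map_univ_eq (Tuple.monotone_sort _) hσ ?_) i.rev
  rw [← Multiset.map_map, ← Multiset.map_map, Multiset.map_univ_val_equiv,
    Multiset.map_univ_val_equiv]
  exact hb.map_eigenvalues_eq_of_eq_conj_diagonal U e h

theorem funCalc_add {n : ℕ} (f g : ℝ → ℝ) (a : Matrix (Fin n) (Fin n) ℂ) (ha : a.IsHermitian) :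
    funCalc f a ha + funCalc g a ha = funCalc (f + g) a ha := by
  simp only [funCalc, ← Matrix.mul_add, ← Matrix.add_mul, diagonal_add, Pi.add_apply,
    Complex.ofReal_add]

theorem eigDesc_of_eq_funCalc {n : ℕ} {a b : Matrix (Fin n) (Fin n) ℂ} (ha : a.IsHermitian)
    (hb : b.IsHermitian) {f : ℝ → ℝ} (hf : MonotoneOn f (Set.range ha.eigenvalues))
    (hab : b = funCalc f a ha) (i : Fin n) :
    eigDesc b hb i = f (eigDesc a ha i) :=
  eigDesc_eq_of_eq_conj_diagonal hb ha.eigenvectorUnitary (f ∘ ha.eigenvalues)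
    (Tuple.sort ha.eigenvalues)
    (fun _ _ hij => hf ⟨_, rfl⟩ ⟨_, rfl⟩ (Tuple.monotone_sort ha.eigenvalues hij)) hab i

theorem choquetTrace_eq_add_of_eigDesc {n : ℕ} (α : ℕ → ℝ) {a b c : Matrix (Fin n) (Fin n) ℂ}
    (ha : a.IsHermitian) (hb : b.IsHermitian) (hc : c.IsHermitian)
    (h : ∀ i, eigDesc c hc i = eigDesc a ha i + eigDesc b hb i) :
    choquetTrace α c hc = choquetTrace α a ha + choquetTrace α b hb := by
  have heigN : ∀ k, eigN c hc k = eigN a ha k + eigN b hb k := by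
    intro k
    unfold eigN
    split_ifs
    · exact h _
    · simp
  simp only [choquetTrace, heigN, ← sum_add_distrib]
  exact sum_congr rfl fun _ _ => by ring

theorem stmt4_general (n : ℕ) (α : ℕ → ℝ)
    (a : Matrix (Fin n) (Fin n) ℂ) (ha : a.PosSemidef) (f g : ℝ → ℝ)
    (hf : MonotoneOn f (Set.range ha.1.eigenvalues))
    (hg : MonotoneOn g (Set.range ha.1.eigenvalues))
    (h1 : (funCalc f a ha.1).IsHermitian) (h2 : (funCalc g a ha.1).IsHermitian)
    (h3 : (funCalc f a ha.1 + funCalc g a ha.1).IsHermitian) :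
    choquetTrace α (funCalc f a ha.1 + funCalc g a ha.1) h3
      = choquetTrace α (funCalc f a ha.1) h1 + choquetTrace α (funCalc g a ha.1) h2 := by
  refine choquetTrace_eq_add_of_eigDesc α h1 h2 h3 fun i => ?_
  rw [eigDesc_of_eq_funCalc ha.1 h3 (hf.add hg) (funCalc_add f g a ha.1) i,
    eigDesc_of_eq_funCalc ha.1 h1 hf rfl i, eigDesc_of_eq_funCalc ha.1 h2 hg rfl i]

/-- the Choquet-type trace is additive on sums of monotone increasing
functional calculi of a fixed positive semidefinite matrix. -/
theorem stmt4 (n : ℕ) (α : ℕ → ℝ) (hα0 : α 0 = 0)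
    (hmono : ∀ i j : ℕ, i ≤ j → j ≤ n → α i ≤ α j)
    (a : Matrix (Fin n) (Fin n) ℂ) (ha : a.PosSemidef) (f g : ℝ → ℝ)
    (hf : MonotoneOn f (Set.range ha.1.eigenvalues))
    (hg : MonotoneOn g (Set.range ha.1.eigenvalues))
    (hf0 : ∀ i, 0 ≤ f (ha.1.eigenvalues i)) (hg0 : ∀ i, 0 ≤ g (ha.1.eigenvalues i))
    (h1 : (funCalc f a ha.1).IsHermitian) (h2 : (funCalc g a ha.1).IsHermitian)
    (h3 : (funCalc f a ha.1 + funCalc g a ha.1).IsHermitian) :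
    choquetTrace α (funCalc f a ha.1 + funCalc g a ha.1) h3
      = choquetTrace α (funCalc f a ha.1) h1 + choquetTrace α (funCalc g a ha.1) h2 :=
  stmt4_general n α a ha f g hf hg h1 h2 h3
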